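/- For nonnegative numbers p₁,…,p_d with Σ p_i = 1 and all p_i > 0, the function f(x) = Π_{i=1}^d (x_i / √p_i)^{p_i} on ℝ^d₊ is a self-dual antinorm: it is concave, positively homogeneous, nonnegative, and satisfies inf{(y,x) : x ∈ ℝ^d₊, f(x) ≥ 1} = f(y) for all y ∈ ℝ^d₊. -/

import Mathlib

/-- The nonnegative orthant in ℝ^d. -/
def orthant (d : ℕ) : Set (EuclideanSpace ℝ (Fin d)) := {x | ∀ i, 0 ≤ x i}

/-- An antinorm on ℝ^d₊: concave, positively homogeneous, nonnegative,
and positive somewhere. -/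
def IsAntinorm {d : ℕ} (f : EuclideanSpace ℝ (Fin d) → ℝ) : Prop :=
  ConcaveOn ℝ (orthant d) f ∧
  (∀ x ∈ orthant d, ∀ c : ℝ, 0 ≤ c → f (c • x) = c * f x) ∧
  (∀ x ∈ orthant d, 0 ≤ f x) ∧
  (∃ x ∈ orthant d, 0 < f x)

/-- The dual antinorm f*(y) = inf{(y,x) : x ∈ ℝ^d₊, f(x) ≥ 1}. -/
noncomputable def dualAntinorm {d : ℕ} (f : EuclideanSpace ℝ (Fin d) → ℝ)
    (y : EuclideanSpace ℝ (Fin d)) : ℝ :=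
  sInf ((fun x => (inner ℝ y x : ℝ)) '' {x | x ∈ orthant d ∧ 1 ≤ f x})

/-!
In the coordinates `u = x / √p` the function is the weighted geometric mean
`g u = ∏ i, u i ^ p i`, and the Euclidean pairing `(y, x)` becomes `∑ i, p i * u i * v i`.
Weighted AM-GM gives `g u * g v ≤ ∑ i, p i * u i * v i`, with equality for `v = g u / u`
when `u > 0`; perturbing `u` to `u + ε` and letting `ε → 0` handles zero coordinates.
Hence `g u` is the infimum of `∑ i, p i * u i * v i` over `g v ≥ 1`, which is self-duality,
and concavity follows because an infimum of linear functionals is concave.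
-/

open Finset Filter Topology

noncomputable def geomMean {ι : Type*} [Fintype ι] (p z : ι → ℝ) : ℝ := ∏ i, z i ^ p i

section GeomMean

variable {ι : Type*} [Fintype ι] {p u v w : ι → ℝ}

lemma geomMean_nonneg (hu : 0 ≤ u) : 0 ≤ geomMean p u :=
  prod_nonneg fun i _ => Real.rpow_nonneg (hu i) _

lemma geomMean_pos (hu : ∀ i, 0 < u i) : 0 < geomMean p u :=
  prod_pos fun i _ => Real.rpow_pos_of_pos (hu i) _

lemma geomMean_mul (hu : 0 ≤ u) (hv : 0 ≤ v) :
    geomMean p (u * v) = geomMean p u * geomMean p v := by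
  simp only [geomMean, Pi.mul_apply, Real.mul_rpow (hu _) (hv _), prod_mul_distrib]

lemma geomMean_inv (hu : 0 ≤ u) : geomMean p u⁻¹ = (geomMean p u)⁻¹ := by
  simp only [geomMean, Pi.inv_apply, Real.inv_rpow (hu _), prod_inv_distrib]

lemma geomMean_smul (hp : 0 ≤ p) (hsum : ∑ i, p i = 1) {c : ℝ} (hc : 0 ≤ c) (hu : 0 ≤ u) :
    geomMean p (c • u) = c * geomMean p u := by
  simp only [geomMean, Pi.smul_apply, smul_eq_mul, Real.mul_rpow hc (hu _), prod_mul_distrib,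
    ← Real.rpow_sum_of_nonneg hc fun i _ => hp i, hsum, Real.rpow_one]

lemma continuous_geomMean (hp : 0 ≤ p) : Continuous (geomMean p) :=
  continuous_finsetProd _ fun i _ => (Real.continuous_rpow_const (hp i)).comp (continuous_apply i)

lemma geomMean_mul_geomMean_le_sum (hp : 0 ≤ p) (hsum : ∑ i, p i = 1) (hu : 0 ≤ u) (hv : 0 ≤ v) :
    geomMean p u * geomMean p v ≤ ∑ i, p i * u i * v i := by
  calc geomMean p u * geomMean p v = geomMean p (u * v) := (geomMean_mul hu hv).symm
    _ ≤ ∑ i, p i * (u * v) i := Real.geom_mean_le_arith_mean_weighted univ p (u * v)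
        (fun i _ => hp i) hsum fun i _ => mul_nonneg (hu i) (hv i)
    _ = _ := by simp only [Pi.mul_apply, mul_assoc]

lemma exists_geomMean_eq_one_sum_mul_eq (hp : 0 ≤ p) (hsum : ∑ i, p i = 1) (hw : ∀ i, 0 < w i) :
    ∃ v, 0 ≤ v ∧ geomMean p v = 1 ∧ ∑ i, p i * w i * v i = geomMean p w := by
  have hw₀ : 0 ≤ w := fun i => (hw i).le
  have hg := geomMean_pos (p := p) hw
  refine ⟨geomMean p w • w⁻¹, fun i => mul_nonneg hg.le (inv_nonneg.2 (hw₀ i)), ?_, ?_⟩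
  · rw [geomMean_smul (u := w⁻¹) hp hsum hg.le fun i => inv_nonneg.2 (hw₀ i), geomMean_inv hw₀,
      mul_inv_cancel₀ hg.ne']
  · simp only [Pi.smul_apply, Pi.inv_apply, smul_eq_mul]
    calc ∑ i, p i * w i * (geomMean p w * (w i)⁻¹) = ∑ i, p i * geomMean p w :=
          sum_congr rfl fun i _ => by field_simp [(hw i).ne']
      _ = geomMean p w := by rw [← sum_mul, hsum, one_mul]

theorem isGLB_geomMean (hp : 0 ≤ p) (hsum : ∑ i, p i = 1) (hu : 0 ≤ u) :
    IsGLB ((fun v => ∑ i, p i * u i * v i) '' {v | 0 ≤ v ∧ 1 ≤ geomMean p v}) (geomMean p u) := by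
  refine ⟨?_, fun b hb => ?_⟩
  · rintro _ ⟨v, ⟨hv, hv₁⟩, rfl⟩
    calc geomMean p u ≤ geomMean p u * geomMean p v :=
          le_mul_of_one_le_right (geomMean_nonneg hu) hv₁
      _ ≤ _ := geomMean_mul_geomMean_le_sum hp hsum hu hv
  have hlim : Tendsto (fun ε : ℝ => geomMean p (u + fun _ => ε)) (𝓝[>] 0) (𝓝 (geomMean p u)) := by
    have hc : Continuous fun ε : ℝ => geomMean p (u + fun _ => ε) :=
      (continuous_geomMean hp).comp (continuous_const.add (continuous_pi fun _ => continuous_id))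
    have h0 : (u + fun _ => (0 : ℝ)) = u := add_zero u
    simpa only [h0] using (hc.tendsto 0).mono_left nhdsWithin_le_nhds
  refine ge_of_tendsto hlim (eventually_nhdsWithin_of_forall fun ε (hε : 0 < ε) => ?_)
  obtain ⟨v, hv, hv₁, hsum_v⟩ := exists_geomMean_eq_one_sum_mul_eq (w := u + fun _ => ε) hp hsum
    fun i => add_pos_of_nonneg_of_pos (hu i) hε
  calc b ≤ ∑ i, p i * u i * v i := hb ⟨v, ⟨hv, hv₁.ge⟩, rfl⟩
    _ ≤ ∑ i, p i * (u i + ε) * v i := by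
        gcongr with i
        · exact hv i
        · exact hp i
        · linarith
    _ = _ := hsum_v

theorem concaveOn_geomMean (hp : 0 ≤ p) (hsum : ∑ i, p i = 1) :
    ConcaveOn ℝ (Set.Ici 0) (geomMean p) := by
  refine ⟨convex_Ici 0, fun u (hu : 0 ≤ u) v (hv : 0 ≤ v) a b ha hb _ => ?_⟩
  refine (isGLB_geomMean hp hsum (add_nonneg (smul_nonneg ha hu) (smul_nonneg hb hv))).2 ?_
  rintro _ ⟨w, hw, rfl⟩
  have hwu := (isGLB_geomMean hp hsum hu).1 ⟨w, hw, rfl⟩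
  have hwv := (isGLB_geomMean hp hsum hv).1 ⟨w, hw, rfl⟩
  calc a • geomMean p u + b • geomMean p v
      ≤ a * ∑ i, p i * u i * w i + b * ∑ i, p i * v i * w i := by
        simp only [smul_eq_mul]; gcongr
    _ = ∑ i, p i * (a • u + b • v) i * w i := by
        simp only [mul_sum, ← sum_add_distrib, Pi.add_apply, Pi.smul_apply, smul_eq_mul]
        exact sum_congr rfl fun i _ => by ring

end GeomMean

section SelfDual

variable {d : ℕ} {p : Fin d → ℝ}

noncomputable def divSqrt (p : Fin d → ℝ) : EuclideanSpace ℝ (Fin d) →ₗ[ℝ] Fin d → ℝ where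
  toFun x i := x i / √(p i)
  map_add' x y := funext fun i => add_div (x i) (y i) _
  map_smul' c x := funext fun i => mul_div_assoc c (x i) _

@[simp]
lemma divSqrt_apply (x : EuclideanSpace ℝ (Fin d)) (i : Fin d) : divSqrt p x i = x i / √(p i) :=
  rfl

lemma divSqrt_surjective (hp : ∀ i, 0 < p i) : Function.Surjective (divSqrt p) := fun v =>
  ⟨WithLp.toLp 2 fun i => √(p i) * v i,
    funext fun i => mul_div_cancel_left₀ _ (Real.sqrt_pos.2 (hp i)).ne'⟩

lemma mem_orthant_iff_nonneg_divSqrt (hp : ∀ i, 0 < p i) {x : EuclideanSpace ℝ (Fin d)} :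
    x ∈ orthant d ↔ 0 ≤ divSqrt p x :=
  forall_congr' fun i => by
    rw [Pi.zero_apply, divSqrt_apply, le_div_iff₀ (Real.sqrt_pos.2 (hp i)), zero_mul]

lemma orthant_eq_preimage_divSqrt (hp : ∀ i, 0 < p i) :
    orthant d = divSqrt p ⁻¹' Set.Ici 0 :=
  Set.ext fun _ => mem_orthant_iff_nonneg_divSqrt hp

lemma inner_eq_sum_divSqrt (hp : ∀ i, 0 < p i) (y x : EuclideanSpace ℝ (Fin d)) :
    inner ℝ y x = ∑ i, p i * divSqrt p y i * divSqrt p x i := by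
  simp only [PiLp.inner_apply, RCLike.inner_apply, conj_trivial]
  refine sum_congr rfl fun i _ => ?_
  have hs := Real.sqrt_pos.2 (hp i)
  simp only [divSqrt_apply]
  field_simp
  rw [Real.sq_sqrt (hp i).le]

theorem dualAntinorm_geomMean_comp_divSqrt (hp : ∀ i, 0 < p i) (hsum : ∑ i, p i = 1)
    {y : EuclideanSpace ℝ (Fin d)} (hy : y ∈ orthant d) :
    dualAntinorm (geomMean p ∘ divSqrt p) y = geomMean p (divSqrt p y) := by
  have hpre : {x | x ∈ orthant d ∧ 1 ≤ (geomMean p ∘ divSqrt p) x} =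
      divSqrt p ⁻¹' {v | 0 ≤ v ∧ 1 ≤ geomMean p v} := by
    rw [orthant_eq_preimage_divSqrt hp]; rfl
  have hinner : (fun x => inner ℝ y x) = (fun v => ∑ i, p i * divSqrt p y i * v i) ∘ divSqrt p :=
    funext (inner_eq_sum_divSqrt hp y)
  rw [dualAntinorm, hpre, hinner, Set.image_comp, Set.image_preimage_eq _ (divSqrt_surjective hp)]
  have hy' := (mem_orthant_iff_nonneg_divSqrt hp).1 hy
  exact (isGLB_geomMean (fun i => (hp i).le) hsum hy').csInf_eq
    ⟨_, ⟨1, ⟨zero_le_one, by simp [geomMean]⟩, rfl⟩⟩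

end SelfDual

/-- For positive p₁,…,p_d with Σ p_i = 1, the function
f(x) = Π (x_i/√p_i)^{p_i} is a self-dual antinorm on ℝ^d₊. -/
theorem stmt_13 {d : ℕ} (p : Fin d → ℝ) (hp : ∀ i, 0 < p i)
    (hsum : ∑ i, p i = 1) :
    ConcaveOn ℝ (orthant d)
      (fun x : EuclideanSpace ℝ (Fin d) => ∏ i, (x i / Real.sqrt (p i)) ^ (p i)) ∧
    (∀ x ∈ orthant d, ∀ c : ℝ, 0 ≤ c →
      (∏ i, ((c • x : EuclideanSpace ℝ (Fin d)) i / Real.sqrt (p i)) ^ (p i)) =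
        c * ∏ i, (x i / Real.sqrt (p i)) ^ (p i)) ∧
    (∀ x ∈ orthant d, 0 ≤ ∏ i, (x i / Real.sqrt (p i)) ^ (p i)) ∧
    (∀ y ∈ orthant d,
      dualAntinorm
        (fun x : EuclideanSpace ℝ (Fin d) => ∏ i, (x i / Real.sqrt (p i)) ^ (p i)) y =
        ∏ i, (y i / Real.sqrt (p i)) ^ (p i)) := by
  have hp₀ : 0 ≤ p := fun i => (hp i).le
  have hmem := fun x => (mem_orthant_iff_nonneg_divSqrt (p := p) hp (x := x)).1
  refine ⟨orthant_eq_preimage_divSqrt hp ▸ (concaveOn_geomMean hp₀ hsum).comp_linearMap _,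
    fun x hx c hc => ?_, fun x hx => geomMean_nonneg (hmem x hx),
    fun y hy => dualAntinorm_geomMean_comp_divSqrt hp hsum hy⟩
  calc geomMean p (divSqrt p (c • x)) = geomMean p (c • divSqrt p x) := by rw [map_smul]
    _ = c * geomMean p (divSqrt p x) := geomMean_smul hp₀ hsum hc (hmem x hx)
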